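/- Let f : [0,1] → ℝ be defined piecewise by f(t) = 0 for t ∈ [0,1/5], f(t) = 5/6 − 1/(6t) − (1/6)·ln(5t) for t ∈ [1/5,1/2], f(t) = 1/2 − (1/6)·ln(5−5t) for t ∈ [1/2,4/5], and f(t) = 1/2 for t ∈ [4/5,1]. Then for all t1, t2 ∈ [0,1]: 1 + (t1 − t2)·[f(t1) − f(t2) − f(1−t1) + f(1−t2)] ≥ (5/6)·(1 + |t1 − t2|). Consequently, the full mechanism A(t1,t2) := f(t1) − f(t2) + 1/2 is 5/6-competitive, since its truthful social welfare equals the left-hand side and the first-best social welfare for types (t1,1−t1), (t2,1−t2) equals 1 + |t1 − t2|. -/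
import Mathlib

set_option maxHeartbeats 1000000

/-- The piecewise function `f` from the 5/6-competitive full mechanism for two items. -/
noncomputable def f (t : ℝ) : ℝ :=
  if t ≤ 1/5 then 0
  else if t ≤ 1/2 then 5/6 - 1/(6*t) - (1/6) * Real.log (5*t)
  else if t ≤ 4/5 then 1/2 - (1/6) * Real.log (5 - 5*t)
  else 1/2

/-- The allocation function of the 5/6-competitive full mechanism. -/
noncomputable def A (t1 t2 : ℝ) : ℝ := f t1 - f t2 + 1/2

/-- The utility attained by agent 1 in the symmetric two-item mechanism described by `A`
when her true utility vector is `(b1, 1-b1)`, she bids truthfully, and agent 2 bids `b2`. -/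
noncomputable def uhat (b1 b2 : ℝ) : ℝ :=
  b1 * A b1 b2 + (1 - b1) * A (1 - b1) (1 - b2)

lemma fA {t : ℝ} (h : t ≤ 1/5) : f t = 0 := by rw [f, if_pos h]

lemma fB {t : ℝ} (h1 : 1/5 ≤ t) (h2 : t ≤ 1/2) :
    f t = 5/6 - 1/(6*t) - (1/6) * Real.log (5*t) := by
  by_cases h : t ≤ 1/5
  · have ht : t = 1/5 := le_antisymm h h1
    subst ht
    rw [f, if_pos le_rfl]
    norm_num
  · rw [f, if_neg h, if_pos h2]

lemma fC {t : ℝ} (h1 : 1/2 ≤ t) (h2 : t ≤ 4/5) :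
    f t = 1/2 - (1/6) * Real.log (5 - 5*t) := by
  by_cases h : t ≤ 1/2
  · have ht : t = 1/2 := le_antisymm h h1
    subst ht
    rw [f, if_neg (by norm_num), if_pos le_rfl]
    norm_num
  · rw [f, if_neg (by intro hh; exact h (by linarith)), if_neg h, if_pos h2]

lemma fD {t : ℝ} (h1 : 4/5 ≤ t) : f t = 1/2 := by
  by_cases h : t ≤ 4/5
  · have ht : t = 4/5 := le_antisymm h h1
    subst ht
    rw [f, if_neg (by norm_num), if_neg (by norm_num), if_pos le_rfl]
    norm_num
  · rw [f, if_neg (by intro hh; exact h (by linarith)),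
       if_neg (by intro hh; exact h (by linarith)), if_neg h]

lemma gA {t : ℝ} (h0 : 0 ≤ t) (h : t ≤ 1/5) : f t - f (1 - t) = -(1/2) := by
  rw [fA h, fD (by linarith)]; ring

lemma gB {t : ℝ} (h1 : 1/5 ≤ t) (h2 : t ≤ 1/2) :
    f t - f (1 - t) = 1/3 - 1/(6*t) := by
  rw [fB h1 h2, fC (by linarith) (by linarith)]
  rw [show 5 - 5 * (1 - t) = 5 * t by ring]; ring

lemma gC {t : ℝ} (h1 : 1/2 ≤ t) (h2 : t ≤ 4/5) :
    f t - f (1 - t) = 1/(6*(1-t)) - 1/3 := by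
  have h := gB (t := 1 - t) (by linarith) (by linarith)
  rw [show (1 : ℝ) - (1 - t) = t by ring] at h
  linarith

lemma gD {t : ℝ} (h1 : 4/5 ≤ t) (h2 : t ≤ 1) : f t - f (1 - t) = 1/2 := by
  rw [fD h1, fA (by linarith)]; ring

lemma key {t1 t2 : ℝ} (h0 : 0 ≤ t2) (h12 : t2 ≤ t1) (h1 : t1 ≤ 1) :
    1 + (t1 - t2) * (f t1 - f t2 - f (1 - t1) + f (1 - t2)) ≥ 5/6 * (1 + (t1 - t2)) := by
  have e : f t1 - f t2 - f (1-t1) + f (1-t2) = (f t1 - f (1-t1)) - (f t2 - f (1-t2)) := by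
    ring
  rw [e, ge_iff_le, ← sub_nonneg]
  rcases le_or_gt t2 (1/5) with c2a | c2a
  · -- t2 in A
    rw [gA h0 c2a]
    rcases le_or_gt t1 (1/5) with c1a | c1a
    · rw [gA (by linarith) c1a]; nlinarith
    rcases le_or_gt t1 (1/2) with c1b | c1b
    · -- (A,B)
      rw [gB c1a.le c1b]
      have ht1 : (0:ℝ) < t1 := by linarith
      have : 1 + (t1 - t2) * (1/3 - 1/(6*t1) - -(1/2)) - 5/6 * (1 + (t1 - t2))
          = t2 / (6*t1) := by field_simp; ring
      rw [this]; positivity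
    rcases le_or_gt t1 (4/5) with c1c | c1c
    · -- (A,C)
      rw [gC c1b.le c1c]
      have hu : (0:ℝ) < 1 - t1 := by linarith
      have : 1 + (t1 - t2) * (1/(6*(1-t1)) - 1/3 - -(1/2)) - 5/6 * (1 + (t1 - t2))
          = ((t1 - t2) + (1 - 4*(t1-t2))*(1-t1)) / (6*(1-t1)) := by field_simp; ring
      rw [this]
      apply div_nonneg _ (by linarith)
      nlinarith [sq_nonneg (t1 - 1/2), mul_nonneg (by linarith : (0:ℝ) ≤ t1 - 1/2) h0,
        mul_nonneg h0 (by linarith : (0:ℝ) ≤ 1/5 - t2)]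
    · -- (A,D)
      rw [gD c1c.le h1]; nlinarith
  · -- t2 > 1/5
    rcases le_or_gt t2 (1/2) with c2b | c2b
    · -- t2 in B
      rw [gB c2a.le c2b]
      have ht2 : (0:ℝ) < t2 := by linarith
      rcases le_or_gt t1 (1/2) with c1b | c1b
      · -- (B,B)
        rw [gB (by linarith) c1b]
        have ht1 : (0:ℝ) < t1 := by linarith
        have : 1 + (t1 - t2) * ((1/3 - 1/(6*t1)) - (1/3 - 1/(6*t2))) - 5/6 * (1 + (t1 - t2))
            = ((t1-t2)^2 - (5*(t1-t2)-1)*(t1*t2)) / (6*t1*t2) := by field_simp; ring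
        rw [this]
        apply div_nonneg _ (by positivity)
        rcases le_or_gt (5*(t1-t2)) 1 with hd | hd
        · nlinarith [mul_pos ht1 ht2]
        · nlinarith [mul_nonneg (by linarith : (0:ℝ) ≤ 5*(t1-t2)-1)
            (mul_nonneg (by linarith : (0:ℝ) ≤ 1/2 - t1) (by linarith : (0:ℝ) ≤ 1/2 + t2)),
            sq_nonneg (t1 - t2 - 1/4)]
      rcases le_or_gt t1 (4/5) with c1c | c1c
      · -- (B,C)
        rw [gC c1b.le c1c]
        have hu : (0:ℝ) < 1 - t1 := by linarith
        have : 1 + (t1 - t2) * ((1/(6*(1-t1)) - 1/3) - (1/3 - 1/(6*t2))) - 5/6 * (1 + (t1 - t2))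
            = ((t1-t2)*((1-t1)+t2) - (9*(t1-t2)-1)*((1-t1)*t2)) / (6*(1-t1)*t2) := by
          field_simp; ring
        rw [this]
        apply div_nonneg _ (by positivity)
        rcases le_or_gt (t1 - t2) (1/9) with hd | hd
        · nlinarith [mul_pos hu ht2]
        · nlinarith [mul_nonneg (by nlinarith : (0:ℝ) ≤ 9*(t1-t2)-1) (sq_nonneg (1-t1-t2)),
            mul_nonneg (by linarith : (0:ℝ) ≤ 1 - (t1-t2)) (sq_nonneg (3*(t1-t2)-1))]
      · -- (B,D)
        rw [gD c1c.le h1]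
        have : 1 + (t1 - t2) * (1/2 - (1/3 - 1/(6*t2))) - 5/6 * (1 + (t1 - t2))
            = ((1 - 4*(t1-t2))*t2 + (t1-t2)) / (6*t2) := by field_simp; ring
        rw [this]
        apply div_nonneg _ (by linarith)
        nlinarith [sq_nonneg (t2 - 1/2), mul_nonneg (by linarith : (0:ℝ) ≤ 1/2 - t2)
          (by linarith : (0:ℝ) ≤ 1 - t1), mul_nonneg (by linarith : (0:ℝ) ≤ 1 - t1)
          (by linarith : (0:ℝ) ≤ t1 - 4/5)]
    · -- t2 > 1/2
      rcases le_or_gt t2 (4/5) with c2c | c2c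
      · -- t2 in C
        rw [gC c2b.le c2c]
        have hu2 : (0:ℝ) < 1 - t2 := by linarith
        rcases le_or_gt t1 (4/5) with c1c | c1c
        · -- (C,C)
          rw [gC (by linarith) c1c]
          have hu1 : (0:ℝ) < 1 - t1 := by linarith
          have : 1 + (t1 - t2) * ((1/(6*(1-t1)) - 1/3) - (1/(6*(1-t2)) - 1/3))
              - 5/6 * (1 + (t1 - t2))
              = ((t1-t2)^2 - (5*(t1-t2)-1)*((1-t1)*(1-t2))) / (6*(1-t1)*(1-t2)) := by
            field_simp; ring
          rw [this]
          apply div_nonneg _ (by positivity)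
          rcases le_or_gt (5*(t1-t2)) 1 with hd | hd
          · nlinarith [mul_pos hu1 hu2]
          · nlinarith [mul_nonneg (by linarith : (0:ℝ) ≤ 5*(t1-t2)-1)
              (mul_nonneg (by linarith : (0:ℝ) ≤ 1/2 - (1-t2)) (by linarith : (0:ℝ) ≤ 1/2 + (1-t1))),
              sq_nonneg (t1 - t2 - 1/4)]
        · -- (C,D)
          rw [gD c1c.le h1]
          have : 1 + (t1 - t2) * (1/2 - (1/(6*(1-t2)) - 1/3)) - 5/6 * (1 + (t1 - t2))
              = (1 - t1) / (6*(1-t2)) := by field_simp; ring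
          rw [this]
          apply div_nonneg (by linarith) (by linarith)
      · -- (D,D)
        rw [gD (by linarith) h1, gD (le_of_lt c2c) (by linarith)]
        nlinarith

lemma key_abs : ∀ t1 ∈ Set.Icc (0 : ℝ) 1, ∀ t2 ∈ Set.Icc (0 : ℝ) 1,
    1 + (t1 - t2) * (f t1 - f t2 - f (1 - t1) + f (1 - t2)) ≥ 5/6 * (1 + |t1 - t2|) := by
  intro t1 h1 t2 h2
  rcases le_total t2 t1 with h | h
  · rw [abs_of_nonneg (by linarith)]
    exact key h2.1 h h1.2
  · rw [abs_of_nonpos (by linarith)]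
    have hk := key h1.1 h h2.2
    have e : (t2 - t1) * (f t2 - f t1 - f (1 - t2) + f (1 - t1))
        = (t1 - t2) * (f t1 - f t2 - f (1 - t1) + f (1 - t2)) := by ring
    rw [e] at hk
    linarith

/-- The key inequality: for all `t1, t2 ∈ [0,1]`,
`1 + (t1 − t2)·[f(t1) − f(t2) − f(1−t1) + f(1−t2)] ≥ (5/6)·(1 + |t1 − t2|)`.
Consequently the full mechanism `A(t1,t2) = f(t1) − f(t2) + 1/2` is 5/6-competitive:
its truthful social welfare `û^A(t1,t2) + û^A(t2,t1)` (which equals the left-hand side)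
is at least 5/6 of the first-best social welfare `1 + |t1 − t2|`. -/
theorem A_five_sixths_competitive :
    (∀ t1 ∈ Set.Icc (0 : ℝ) 1, ∀ t2 ∈ Set.Icc (0 : ℝ) 1,
      1 + (t1 - t2) * (f t1 - f t2 - f (1 - t1) + f (1 - t2)) ≥
        5/6 * (1 + |t1 - t2|)) ∧
    (∀ t1 ∈ Set.Icc (0 : ℝ) 1, ∀ t2 ∈ Set.Icc (0 : ℝ) 1,
      uhat t1 t2 + uhat t2 t1 ≥ 5/6 * (1 + |t1 - t2|)) := by
  refine ⟨key_abs, ?_⟩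
  intro t1 h1 t2 h2
  have e : uhat t1 t2 + uhat t2 t1
      = 1 + (t1 - t2) * (f t1 - f t2 - f (1 - t1) + f (1 - t2)) := by
    simp only [uhat, A]; ring
  rw [e]
  exact key_abs t1 h1 t2 h2
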